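/- arXiv:1607.04781 — 4 statements merged into one kernel-verified Lean document; each statement's English description precedes it below -/
import Mathlib

section
/- Let X be a metrizable space and let f : X → Y be a perfect map (continuous, closed, with compact fibers) from X onto an analytic space Y. Then X is analytic. -/
open Set Function TopologicalSpace MeasureTheory

universe u

/-- A space is analytic if it is a continuous image of the Baire space `ℕ → ℕ`. -/
def IsAnalyticSpace (X : Type*) [TopologicalSpace X] : Prop :=
  ∃ f : (ℕ → ℕ) → X, Continuous f ∧ Surjective f

/-- A space is Lusin if it is an injective continuous image of the Baire space. -/
def IsLusinSpace (X : Type*) [TopologicalSpace X] : Prop :=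
  ∃ f : (ℕ → ℕ) → X, Continuous f ∧ Injective f ∧ Surjective f

/-- A map is perfect if it is continuous, closed, and has compact fibers. -/
def IsPerfectMap {X Y : Type*} [TopologicalSpace X] [TopologicalSpace Y] (f : X → Y) : Prop :=
  Continuous f ∧ IsClosedMap f ∧ ∀ y : Y, IsCompact (f ⁻¹' {y})

/-- The remainder `βX \ X` of a space in its Stone–Čech compactification. -/
def StoneCechRemainder (X : Type u) [TopologicalSpace X] : Set (StoneCech X) :=
  (Set.range (stoneCechUnit : X → StoneCech X))ᶜ

/-- A space is co-analytic if its Stone–Čech remainder is analytic. -/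
def CoAnalytic (X : Type u) [TopologicalSpace X] : Prop :=
  IsAnalyticSpace ↥(StoneCechRemainder X)

/-- A space is Čech-complete if it is a `Gδ` subset of its Stone–Čech compactification. -/
def CechComplete (X : Type u) [TopologicalSpace X] : Prop :=
  IsGδ (Set.range (stoneCechUnit : X → StoneCech X))

/-- A space is K-analytic if it is a continuous image of a Lindelöf Čech-complete
(Tychonoff) space. -/
def KAnalytic (X : Type u) [TopologicalSpace X] : Prop :=
  ∃ (Y : Type u) (_ : TopologicalSpace Y) (_ : T35Space Y),
    LindelofSpace Y ∧ CechComplete Y ∧ ∃ f : Y → X, Continuous f ∧ Surjective f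

/-- A space is K-Lusin if it is an injective continuous image of a Lindelöf Čech-complete
(Tychonoff) space. -/
def KLusin (X : Type u) [TopologicalSpace X] : Prop :=
  ∃ (Y : Type u) (_ : TopologicalSpace Y) (_ : T35Space Y),
    LindelofSpace Y ∧ CechComplete Y ∧ ∃ f : Y → X, Continuous f ∧ Injective f ∧ Surjective f

/-- The Menger property. -/
def MengerSpace (X : Type*) [TopologicalSpace X] : Prop :=
  ∀ U : ℕ → Set (Set X), (∀ n, ∀ u ∈ U n, IsOpen u) → (∀ n, ⋃₀ U n = univ) →
    ∃ V : ℕ → Set (Set X), (∀ n, V n ⊆ U n ∧ (V n).Finite) ∧ ⋃₀ (⋃ n, V n) = univ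

/-- The Rothberger property. -/
def RothbergerSpace (X : Type*) [TopologicalSpace X] : Prop :=
  ∀ U : ℕ → Set (Set X), (∀ n, ∀ u ∈ U n, IsOpen u) → (∀ n, ⋃₀ U n = univ) →
    ∃ V : ℕ → Set X, (∀ n, V n ∈ U n) ∧ (⋃ n, V n) = univ

/-- A space is productively Lindelöf if its product with every Lindelöf (Tychonoff)
space is Lindelöf. -/
def ProductivelyLindelof (X : Type u) [TopologicalSpace X] : Prop :=
  ∀ (Y : Type u) (_ : TopologicalSpace Y) (_ : T35Space Y),
    LindelofSpace Y → LindelofSpace (X × Y)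

/-- A Michael space is a Lindelöf (Tychonoff) space whose product with the Baire space
is not Lindelöf. -/
def ExistsMichaelSpace : Prop :=
  ∃ (Y : Type u) (_ : TopologicalSpace Y) (_ : T35Space Y),
    LindelofSpace Y ∧ ¬ LindelofSpace (Y × (ℕ → ℕ))

/-- The Hurewicz property: every Čech-complete space in which `X` embeds contains a
σ-compact subspace containing the image of `X`. -/
def HurewiczSpace (X : Type u) [TopologicalSpace X] : Prop :=
  ∀ (Y : Type u) (_ : TopologicalSpace Y) (_ : T35Space Y), CechComplete Y →
    ∀ f : X → Y, Topology.IsEmbedding f → ∃ S : Set Y, IsSigmaCompact S ∧ range f ⊆ S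

/-- A space is projectively σ-compact if each of its continuous images in a separable
metrizable space is σ-compact. -/
def ProjectivelySigmaCompact (X : Type u) [TopologicalSpace X] : Prop :=
  ∀ (M : Type u) (_ : TopologicalSpace M) (_ : SeparableSpace M) (_ : MetrizableSpace M)
    (f : X → M), Continuous f → IsSigmaCompact (range f)

/-- A space is projectively countable if each of its continuous images in a separable
metrizable space is countable. -/
def ProjectivelyCountable (X : Type u) [TopologicalSpace X] : Prop :=
  ∀ (M : Type u) (_ : TopologicalSpace M) (_ : SeparableSpace M) (_ : MetrizableSpace M)
    (f : X → M), Continuous f → (range f).Countable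

/-- The Alster property. -/
def AlsterSpace (X : Type*) [TopologicalSpace X] : Prop :=
  ∀ G : Set (Set X), (∀ g ∈ G, IsGδ g) → ⋃₀ G = univ →
    (∀ K : Set X, IsCompact K → ∃ F : Set (Set X), F ⊆ G ∧ F.Finite ∧ K ⊆ ⋃₀ F) →
    ∃ C : Set (Set X), C ⊆ G ∧ C.Countable ∧ ⋃₀ C = univ

/-- A compact set has countable character if it has a countable neighborhood base of
open sets. -/
def HasCountableChar {X : Type*} [TopologicalSpace X] (L : Set X) : Prop :=
  ∃ B : ℕ → Set X, (∀ n, IsOpen (B n) ∧ L ⊆ B n) ∧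
    ∀ U : Set X, IsOpen U → L ⊆ U → ∃ n, B n ⊆ U

/-- A space is of countable type if every compact set is contained in a compact set
of countable character. -/
def CountableType (X : Type*) [TopologicalSpace X] : Prop :=
  ∀ K : Set X, IsCompact K → ∃ L : Set X, IsCompact L ∧ K ⊆ L ∧ HasCountableChar L

/-- A space is nowhere locally compact if no point has a compact neighborhood. -/
def NowhereLocallyCompact (X : Type*) [TopologicalSpace X] : Prop :=
  ∀ x : X, ∀ K ∈ nhds x, ¬ IsCompact (K : Set X)

/-- Weight at most `c`: there is a basis of cardinality at most `c`. -/
def WeightLE (X : Type u) [TopologicalSpace X] (c : Cardinal.{u}) : Prop :=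
  ∃ B : Set (Set X), IsTopologicalBasis B ∧ Cardinal.mk B ≤ c

/-- A space is Frolík if it is homeomorphic to a closed subspace of a countable product
of σ-compact (Tychonoff) spaces. -/
def FrolikSpace (X : Type u) [TopologicalSpace X] : Prop :=
  ∃ (Y : ℕ → Type u) (_ : ∀ n, TopologicalSpace (Y n)) (_ : ∀ n, T35Space (Y n))
    (_ : ∀ n, SigmaCompactSpace (Y n)) (C : Set (∀ n, Y n)),
    IsClosed C ∧ Nonempty (X ≃ₜ ↥C)

/-- An s-space: some compactification has a countable open source for `X`. -/
def SSpace (X : Type u) [TopologicalSpace X] : Prop :=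
  ∃ (K : Type u) (_ : TopologicalSpace K) (_ : CompactSpace K) (_ : T2Space K)
    (e : X → K), Topology.IsEmbedding e ∧ DenseRange e ∧
      ∃ S : Set (Set K), S.Countable ∧ (∀ s ∈ S, IsOpen s) ∧
        ∃ F : Set (Set (Set K)), (∀ T ∈ F, T ⊆ S ∧ T.Nonempty) ∧
          range e = ⋃ T ∈ F, ⋂₀ T

/-- A space is Lindelöf p if it admits a perfect map onto a separable metrizable space. -/
def LindelofP (X : Type u) [TopologicalSpace X] : Prop :=
  ∃ (M : Type u) (_ : TopologicalSpace M) (_ : SeparableSpace M) (_ : MetrizableSpace M)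
    (f : X → M), IsPerfectMap f ∧ Surjective f

/-- A space is proper K-analytic if it admits a perfect map onto an analytic subspace
of `ℝ^ω`. -/
def ProperKAnalytic (X : Type u) [TopologicalSpace X] : Prop :=
  ∃ A : Set (ℕ → ℝ), IsAnalyticSpace ↥A ∧ ∃ f : X → ↥A, IsPerfectMap f ∧ Surjective f

/-- A space is proper K-Lusin if it admits a perfect map onto a Lusin subspace of `ℝ^ω`. -/
def ProperKLusin (X : Type u) [TopologicalSpace X] : Prop :=
  ∃ A : Set (ℕ → ℝ), IsLusinSpace ↥A ∧ ∃ f : X → ↥A, IsPerfectMap f ∧ Surjective f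

/-- A space is absolute Borel if, viewed as a subset of its Stone–Čech compactification,
it belongs to the σ-algebra generated by the closed sets. -/
def AbsoluteBorel (X : Type u) [TopologicalSpace X] : Prop :=
  MeasurableSet[MeasurableSpace.generateFrom {s : Set (StoneCech X) | IsClosed s}]
    (Set.range (stoneCechUnit : X → StoneCech X))

/-! An analytic space is Lindelöf, and a perfect preimage of a Lindelöf space is Lindelöf, so `X`
is separable metrizable. Writing `Y` as the image of `g : (ℕ → ℕ) → Y`, the fibre product
`{(σ, x) | g σ = f x}` maps properly onto `ℕ → ℕ` and onto `X`. A separable metrizable space with a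
proper map `f` to a Polish space `P` is Polish, since `x ↦ (f x, x)` is a closed embedding into
`P` times the completion of `X`; so `X` is a continuous image of a Polish space. -/

open Topology

section ProperMap

variable {X Y Z W : Type*} [TopologicalSpace X] [TopologicalSpace Y] [TopologicalSpace Z]
  [TopologicalSpace W]

theorem IsProperMap.isLindelof_preimage {f : X → Y} (hf : IsProperMap f) {K : Set Y}
    (hK : IsLindelof K) : IsLindelof (f ⁻¹' K) := by
  intro F _ _ hF
  obtain ⟨y, hyK, hy⟩ := hK ((mapsTo_preimage f K).tendsto.mono_left hF)
  obtain ⟨x, rfl, hx⟩ := hf.clusterPt_of_mapClusterPt hy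
  exact ⟨x, hyK, hx⟩

theorem IsProperMap.lindelofSpace [LindelofSpace Y] {f : X → Y} (hf : IsProperMap f) :
    LindelofSpace X :=
  ⟨by simpa using hf.isLindelof_preimage isLindelof_univ⟩

theorem IsProperMap.pullback_fst [T2Space Z] {f : X → Z} (hf : IsProperMap f) {g : W → Z}
    (hg : Continuous g) : IsProperMap fun p : {p : W × X | g p.1 = f p.2} ↦ p.1.1 := by
  have hclosed : IsClosed {p : W × X | g p.1 = f p.2} :=
    isClosed_eq (hg.comp continuous_fst) (hf.continuous.comp continuous_snd)
  have hgraph : Injective fun w : W ↦ (w, g w) := fun _ _ h ↦ congrArg Prod.fst h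
  refine isProperMap_of_comp_of_inj (by fun_prop) (by fun_prop) ?_ hgraph
  have hcomm : ((fun w ↦ (w, g w)) ∘ fun p : {p : W × X | g p.1 = f p.2} ↦ p.1.1) =
      fun p ↦ Prod.map id f p.1 :=
    funext fun p ↦ Prod.ext rfl p.2
  rw [hcomm]
  exact (isProperMap_id.prodMap hf).restrict hclosed

theorem IsProperMap.polishSpace [MetrizableSpace X] [SecondCountableTopology X] [PolishSpace Y]
    {f : X → Y} (hf : IsProperMap f) : PolishSpace X := by
  let := metrizableSpaceMetric X
  have he : IsEmbedding ((↑) : X → UniformSpace.Completion X) :=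
    (UniformSpace.Completion.isUniformEmbedding_coe X).isEmbedding
  have hproper : IsProperMap fun x ↦ (f x, (x : UniformSpace.Completion X)) :=
    isProperMap_of_comp_of_t2 (hf.continuous.prodMk he.continuous) continuous_fst hf
  exact (IsClosedEmbedding.of_continuous_injective_isClosedMap hproper.continuous
    (fun _ _ h ↦ he.injective (congrArg Prod.snd h)) hproper.isClosedMap).polishSpace

end ProperMap

theorem IsAnalyticSpace.of_continuous_surjective {P X : Type*} [TopologicalSpace P] [PolishSpace P]
    [Nonempty P] [TopologicalSpace X] {h : P → X} (hc : Continuous h) (hs : Surjective h) :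
    IsAnalyticSpace X := by
  obtain ⟨φ, hφc, hφs⟩ := PolishSpace.exists_nat_nat_continuous_surjective P
  exact ⟨h ∘ φ, hc.comp hφc, hs.comp hφs⟩

theorem IsAnalyticSpace.lindelofSpace {X : Type*} [TopologicalSpace X] (hX : IsAnalyticSpace X) :
    LindelofSpace X :=
  let ⟨_, hc, hs⟩ := hX
  .of_continuous_surjective hc hs

theorem metrizable_perfect_preimage_analytic_general {X Y : Type u}
    [TopologicalSpace X] [MetrizableSpace X]
    [TopologicalSpace Y] [T35Space Y]
    (f : X → Y) (hf : IsPerfectMap f) (hsurj : Surjective f)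
    (hY : IsAnalyticSpace Y) : IsAnalyticSpace X := by
  have hfp : IsProperMap f := isProperMap_iff_isClosedMap_and_compact_fibers.mpr hf
  have : LindelofSpace Y := hY.lindelofSpace
  have : LindelofSpace X := hfp.lindelofSpace
  obtain ⟨g, hg, hgs⟩ := hY
  set T := {p : (ℕ → ℕ) × X | g p.1 = f p.2}
  have : PolishSpace T := (hfp.pullback_fst hg).polishSpace
  have hproj : Surjective fun p : T ↦ p.1.2 := fun x ↦
    let ⟨σ, hσ⟩ := hgs (f x)
    ⟨⟨(σ, x), hσ⟩, rfl⟩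
  have : Nonempty Y := ⟨g 0⟩
  have : Nonempty X := hsurj.nonempty
  have := hproj.nonempty
  exact .of_continuous_surjective (by fun_prop) hproj

/-- Metrizable perfect pre-images of analytic spaces are analytic. -/
theorem metrizable_perfect_preimage_analytic {X Y : Type u}
    [TopologicalSpace X] [T35Space X] [MetrizableSpace X]
    [TopologicalSpace Y] [T35Space Y]
    (f : X → Y) (hf : IsPerfectMap f) (hsurj : Surjective f)
    (hY : IsAnalyticSpace Y) : IsAnalyticSpace X :=
  metrizable_perfect_preimage_analytic_general f hf hsurj hY
end

section
/- Every Alster space of countable type is σ-compact. -/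
open Set Function TopologicalSpace MeasureTheory

universe u

/-- Alster spaces of countable type are σ-compact. -/
theorem alster_countableType_sigmaCompact
    (X : Type u) [TopologicalSpace X] [T35Space X]
    (hA : AlsterSpace X) (hCT : CountableType X) : SigmaCompactSpace X := by
  set G : Set (Set X) := {L | IsCompact L ∧ HasCountableChar L} with hGdef
  have hGδ : ∀ g ∈ G, IsGδ g := by
    rintro g ⟨hgc, B, hB1, hB2⟩
    have hge : g = ⋂ n, B n := by
      apply Subset.antisymm (subset_iInter fun n => (hB1 n).2)
      intro x hx
      by_contra hxg
      obtain ⟨U, V, hU, hV, hgU, hxV, hUV⟩ := hgc.separation_of_notMem hxg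
      obtain ⟨n, hn⟩ := hB2 U hU hgU
      exact hUV.ne_of_mem (hn (mem_iInter.mp hx n)) hxV rfl
    rw [hge]
    exact .iInter_of_isOpen fun n => (hB1 n).1
  have hcov : ⋃₀ G = univ := by
    apply eq_univ_of_forall
    intro x
    obtain ⟨L, hLc, hxL, hch⟩ := hCT {x} isCompact_singleton
    exact ⟨L, ⟨hLc, hch⟩, hxL (mem_singleton x)⟩
  have hfin : ∀ K : Set X, IsCompact K →
      ∃ F : Set (Set X), F ⊆ G ∧ F.Finite ∧ K ⊆ ⋃₀ F := by
    intro K hK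
    obtain ⟨L, hLc, hKL, hch⟩ := hCT K hK
    exact ⟨{L}, by simp [hGdef, hLc, hch], finite_singleton L,
      by simpa using hKL⟩
  obtain ⟨C, hCG, hCc, hCu⟩ := hA G hGδ hcov hfin
  rcases C.eq_empty_or_nonempty with rfl | hCne
  · simp at hCu
    exact ⟨⟨fun _ => ∅, fun _ => isCompact_empty, by simp [hCu.symm]⟩⟩
  obtain ⟨f, hf⟩ := hCc.exists_eq_range hCne
  refine ⟨⟨f, fun n => (hCG (by rw [hf]; exact mem_range_self n)).1, ?_⟩⟩
  rw [← hCu, hf, sUnion_range]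
end

section
/- Every Menger K-analytic space is Hurewicz. -/
open Set Function TopologicalSpace MeasureTheory

universe u

/-!
Embed `X` in a Čech-complete `Z`, so that `Z = ⋂ₙ Hₙ` inside `βZ` with `Hₙ` open. Menger spaces
are Lindelöf, so the image of `X` lies in a cozero set of `βZ` inside each `Hₙ`; the reciprocals of
these cozero functions form a continuous `τ : X → ℝ^ℕ` such that points of `X` with values of `τ`
in a compact set are sent into a compact subset of `Z`. It therefore suffices to cover `τ(X)` by a
σ-compact subset of the Polish space `ℝ^ℕ`.

`τ(X)` is Menger, and, `X` being a continuous image of a Lindelöf Čech-complete `Y`, it is the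
root of a Souslin scheme built from countable closed covers of `Y` in `βY` whose branches stay in
`Y`. Hurewicz's dichotomy applies: if the root were not covered by a σ-compact set, points around
which it is nowhere covered by one form a closed non-compact set, which yields a tree of separated
balls; its body is a closed subset of the root mapping continuously onto the Baire space `ℕ^ℕ`,
which is not Menger.
-/
open Filter Topology Metric

section Menger

variable {α β : Type*} [TopologicalSpace α] [TopologicalSpace β]

theorem MengerSpace.of_surjective (hM : MengerSpace α) {f : α → β} (hf : Continuous f)
    (hs : Surjective f) : MengerSpace β := by
  intro U hUo hU
  obtain ⟨V, hV, hVU⟩ := hM (fun n => preimage f '' U n)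
    (fun n => forall_mem_image.2 fun u hu => (hUo n u hu).preimage hf)
    (fun n => by rw [sUnion_image, ← preimage_iUnion₂, ← sUnion_eq_biUnion, hU n, preimage_univ])
  refine ⟨fun n => U n ∩ preimage f ⁻¹' V n, fun n => ⟨inter_subset_left, ?_⟩, ?_⟩
  · exact ((hV n).2.preimage hs.preimage_injective.injOn).subset inter_subset_right
  · refine eq_univ_of_forall fun y => ?_
    obtain ⟨x, rfl⟩ := hs y
    obtain ⟨v, hv, hxv⟩ := (hVU ▸ mem_univ x : x ∈ ⋃₀ ⋃ n, V n)
    obtain ⟨n, hn⟩ := mem_iUnion.1 hv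
    obtain ⟨u, hu, rfl⟩ := (hV n).1 hn
    exact ⟨u, mem_iUnion.2 ⟨n, hu, hn⟩, hxv⟩

theorem mengerSpace_range (hM : MengerSpace α) {f : α → β} (hf : Continuous f) :
    MengerSpace (range f) :=
  hM.of_surjective (continuous_rangeFactorization_iff.2 hf) rangeFactorization_surjective

theorem MengerSpace.of_isClosed (hM : MengerSpace α) {C : Set α} (hC : IsClosed C) :
    MengerSpace C := by
  intro U hUo hU
  obtain ⟨V, hV, hVU⟩ := hM (fun n => {t | IsOpen t ∧ (↑) ⁻¹' t ∈ U n} ∪ {Cᶜ})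
    (fun n t ht => ht.elim (fun h => h.1) fun h => (mem_singleton_iff.1 h) ▸ hC.isOpen_compl)
    (fun n => eq_univ_of_forall fun x => by
      by_cases hx : x ∈ C
      · obtain ⟨u, hu, hxu⟩ := (hU n ▸ mem_univ _ : (⟨x, hx⟩ : C) ∈ ⋃₀ U n)
        obtain ⟨t, ht, rfl⟩ := isOpen_induced_iff.1 (hUo n u hu)
        exact ⟨t, Or.inl ⟨ht, hu⟩, hxu⟩
      · exact ⟨Cᶜ, Or.inr rfl, hx⟩)
  refine ⟨fun n => preimage (↑) '' V n ∩ U n, fun n => ⟨inter_subset_right,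
    ((hV n).2.image _).subset inter_subset_left⟩, eq_univ_of_forall fun c => ?_⟩
  obtain ⟨t, ht, hct⟩ := (hVU ▸ mem_univ _ : (c : α) ∈ ⋃₀ ⋃ n, V n)
  obtain ⟨n, hn⟩ := mem_iUnion.1 ht
  rcases (hV n).1 hn with htU | rfl
  · exact ⟨_, mem_iUnion.2 ⟨n, mem_image_of_mem _ hn, htU.2⟩, hct⟩
  · exact absurd c.2 hct

theorem MengerSpace.lindelofSpace (hM : MengerSpace α) : LindelofSpace α := by
  refine ⟨isLindelof_of_countable_subcover fun U hUo hU => ?_⟩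
  obtain ⟨V, hV, hVU⟩ := hM (fun _ => range U) (fun _ => forall_mem_range.2 hUo)
    (fun _ => by rw [sUnion_range]; exact univ_subset_iff.1 hU)
  have hVc : (⋃ n, V n).Countable := countable_iUnion fun n => (hV n).2.countable
  have : ∀ v : ⋃ n, V n, ∃ i, U i = v := fun v =>
    let ⟨n, hn⟩ := mem_iUnion.1 v.2; (hV n).1 hn
  choose idx hidx using this
  have := hVc.to_subtype
  refine ⟨range idx, countable_range idx, fun x _ => ?_⟩
  obtain ⟨v, hv, hxv⟩ := (hVU ▸ mem_univ x : x ∈ ⋃₀ ⋃ n, V n)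
  exact mem_biUnion (mem_range_self ⟨v, hv⟩) ((hidx ⟨v, hv⟩).symm ▸ hxv)

theorem not_mengerSpace_baire : ¬ MengerSpace (ℕ → ℕ) := by
  intro hM
  set cyl : ℕ → ℕ → Set (ℕ → ℕ) := fun n k => (fun β => β n) ⁻¹' Iic k
  have hcyl : ∀ n, Injective (cyl n) := fun n k k' h => le_antisymm
    (show (fun _ => k) ∈ cyl n k' from h ▸ le_refl k)
    (show (fun _ => k') ∈ cyl n k from h ▸ le_refl k')
  obtain ⟨V, hV, hVU⟩ := hM (fun n => range (cyl n))
    (fun n => forall_mem_range.2 fun k => (isOpen_discrete (Iic k)).preimage (continuous_apply n))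
    (fun n => eq_univ_of_forall fun β => ⟨cyl n (β n), mem_range_self _, le_refl (β n)⟩)
  choose B hB using fun n => ((hV n).2.preimage (hcyl n).injOn).bddAbove
  obtain ⟨v, hv, hBv⟩ := (hVU ▸ mem_univ _ : (fun n => B n + 1) ∈ ⋃₀ ⋃ n, V n)
  obtain ⟨n, hn⟩ := mem_iUnion.1 hv
  obtain ⟨k, rfl⟩ := (hV n).1 hn
  exact absurd (hB n hn) (not_le.2 (Nat.lt_of_lt_of_le (Nat.lt_succ_self _) hBv))

end Menger

section SigmaCompactCovered

variable {α : Type*} [TopologicalSpace α]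

def SigmaCompactCovered (s : Set α) : Prop :=
  ∃ T, IsSigmaCompact T ∧ s ⊆ T

theorem SigmaCompactCovered.mono {s t : Set α} (ht : SigmaCompactCovered t) (h : s ⊆ t) :
    SigmaCompactCovered s :=
  let ⟨T, hT, htT⟩ := ht; ⟨T, hT, h.trans htT⟩

theorem sigmaCompactCovered_biUnion {ι : Type*} {I : Set ι} (hI : I.Countable) {s : ι → Set α}
    (h : ∀ i ∈ I, SigmaCompactCovered (s i)) : SigmaCompactCovered (⋃ i ∈ I, s i) := by
  choose! T hT hsT using h
  exact ⟨⋃ i ∈ I, T i, isSigmaCompact_biUnion hI hT, iUnion₂_mono hsT⟩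

theorem sigmaCompactCovered_iUnion {ι : Type*} [Countable ι] {s : ι → Set α}
    (h : ∀ i, SigmaCompactCovered (s i)) : SigmaCompactCovered (⋃ i, s i) := by
  simpa using sigmaCompactCovered_biUnion countable_univ fun i _ => h i

theorem SigmaCompactCovered.union {s t : Set α} (hs : SigmaCompactCovered s)
    (ht : SigmaCompactCovered t) : SigmaCompactCovered (s ∪ t) := by
  rw [union_eq_iUnion]
  exact sigmaCompactCovered_iUnion (Bool.forall_bool.2 ⟨ht, hs⟩)

theorem nonempty_of_not_sigmaCompactCovered {s : Set α} (hs : ¬ SigmaCompactCovered s) :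
    s.Nonempty :=
  nonempty_iff_ne_empty.2 fun h => hs ⟨∅, isSigmaCompact_empty, h.le⟩

def nonSigmaCompactLocus (s : Set α) : Set α :=
  {y | ∀ U ∈ 𝓝 y, ¬ SigmaCompactCovered (s ∩ U)}

theorem isClosed_nonSigmaCompactLocus (s : Set α) : IsClosed (nonSigmaCompactLocus s) := by
  refine isOpen_compl_iff.1 (isOpen_iff_mem_nhds.2 fun y hy => ?_)
  simp only [nonSigmaCompactLocus, mem_compl_iff, mem_ofPred_eq, not_forall, not_not] at hy
  obtain ⟨U, hU, hsU⟩ := hy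
  filter_upwards [eventually_mem_nhds_iff.2 hU] with y' hy' h
  exact h U hy' hsU

theorem nonSigmaCompactLocus_subset_closure (s : Set α) : nonSigmaCompactLocus s ⊆ closure s :=
  fun _ hy => mem_closure_iff_nhds.2 fun U hU =>
    inter_comm s U ▸ nonempty_of_not_sigmaCompactCovered (hy U hU)

theorem sigmaCompactCovered_diff_nonSigmaCompactLocus [SecondCountableTopology α] (s : Set α) :
    SigmaCompactCovered (s \ nonSigmaCompactLocus s) := by
  let B := countableBasis α
  refine (sigmaCompactCovered_biUnion ((countable_countableBasis α).mono (sep_subset B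
    fun b => SigmaCompactCovered (s ∩ b))) fun b hb => hb.2).mono fun y ⟨hys, hy⟩ => ?_
  simp only [nonSigmaCompactLocus, mem_ofPred_eq, not_forall, not_not] at hy
  obtain ⟨U, hU, hsU⟩ := hy
  obtain ⟨b, hbB, hyb, hbU⟩ := (isBasis_countableBasis α).mem_nhds_iff.1 hU
  exact mem_biUnion ⟨hbB, hsU.mono (inter_subset_inter_right s hbU)⟩ ⟨hys, hyb⟩

theorem not_isCompact_nonSigmaCompactLocus [SecondCountableTopology α] {s : Set α}
    (hs : ¬ SigmaCompactCovered s) : ¬ IsCompact (nonSigmaCompactLocus s) := fun hc => by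
  refine hs (SigmaCompactCovered.mono ?_ (union_sdiff_self.symm ▸ subset_union_right :
    s ⊆ nonSigmaCompactLocus s ∪ (s \ nonSigmaCompactLocus s)))
  exact SigmaCompactCovered.union ⟨_, hc.isSigmaCompact, subset_rfl⟩
    (sigmaCompactCovered_diff_nonSigmaCompactLocus s)

end SigmaCompactCovered

theorem exists_seq_pairwise_le_dist_of_not_totallyBounded {Q : Type*} [PseudoMetricSpace Q]
    {s : Set Q} (hs : ¬ TotallyBounded s) :
    ∃ ε > 0, ∃ y : ℕ → Q, (∀ n, y n ∈ s) ∧ Pairwise fun m n => ε ≤ dist (y m) (y n) := by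
  simp only [Metric.totallyBounded_iff, not_forall, not_exists, not_and] at hs
  obtain ⟨ε, hε, hs⟩ := hs
  have : Std.Symm fun x y : Q => ε ≤ dist x y := ⟨fun x y h => dist_comm x y ▸ h⟩
  refine ⟨ε, hε, exists_seq_of_forall_finset_exists' (· ∈ s) (fun x y => ε ≤ dist x y)
    fun F _ => ?_⟩
  obtain ⟨y, hys, hy⟩ := not_subset.1 (hs F F.finite_toSet)
  simp only [mem_iUnion, mem_ball, not_exists, not_lt] at hy
  exact ⟨y, hys, fun x hx => dist_comm y x ▸ hy x hx⟩

theorem exists_seq_separated_of_not_sigmaCompactCovered {Q : Type*} [PseudoMetricSpace Q]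
    [CompleteSpace Q] [SecondCountableTopology Q] {s : Set Q} (hs : ¬ SigmaCompactCovered s) :
    ∃ ε > 0, ∃ y : ℕ → Q, (∀ n, y n ∈ closure s) ∧
      (∀ n, ∀ δ > 0, ¬ SigmaCompactCovered (s ∩ ball (y n) δ)) ∧
      Pairwise fun m n => ε ≤ dist (y m) (y n) := by
  have hL := isClosed_nonSigmaCompactLocus s
  obtain ⟨ε, hε, y, hy, hsep⟩ := exists_seq_pairwise_le_dist_of_not_totallyBounded fun h =>
    not_isCompact_nonSigmaCompactLocus hs (h.isCompact_of_isClosed hL)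
  exact ⟨ε, hε, y, fun n => nonSigmaCompactLocus_subset_closure s (hy n),
    fun n δ hδ => hy n _ (ball_mem_nhds _ hδ), hsep⟩

/-- `revPrefix α n = [α (n-1), …, α 1, α 0]`: finite sequences are stored reversed, so that
extending a sequence by one term is `List.cons`. -/
def revPrefix (α : ℕ → ℕ) : ℕ → List ℕ
  | 0 => []
  | n + 1 => α n :: revPrefix α n

@[simp]
theorem length_revPrefix (α : ℕ → ℕ) (n : ℕ) : (revPrefix α n).length = n := by
  induction n with
  | zero => rfl
  | succ n ih => simp [revPrefix, ih]

theorem eq_revPrefix_of_forall_exists_cons {s : ℕ → List ℕ} (h₀ : s 0 = [])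
    (h : ∀ n, ∃ a, s (n + 1) = a :: s n) (n : ℕ) :
    s n = revPrefix (fun m => (s (m + 1)).headI) n := by
  induction n with
  | zero => exact h₀
  | succ n ih =>
    obtain ⟨a, ha⟩ := h n
    rw [revPrefix, ← ih, ha, List.headI_cons]

theorem exists_tree_of_forall_exists_children {N : Type*} {P : N → Prop}
    {R : N → (ℕ → N) → Prop} {root : N} (hroot : P root)
    (h : ∀ p, P p → ∃ ch : ℕ → N, (∀ k, P (ch k)) ∧ R p ch) :
    ∃ T : List ℕ → N, T [] = root ∧ ∀ σ, P (T σ) ∧ R (T σ) fun k => T (k :: σ) := by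
  choose ch hchP hchR using h
  let T' : List ℕ → {p // P p} := fun σ =>
    σ.rec ⟨root, hroot⟩ fun k _ p => ⟨ch p.1 p.2 k, hchP _ _ k⟩
  exact ⟨fun σ => (T' σ).1, rfl, fun σ => ⟨(T' σ).2, hchR _ (T' σ).2⟩⟩

structure SeparatedBallTree (Q : Type*) [PseudoMetricSpace Q] where
  center : List ℕ → Q
  radius : List ℕ → ℝ
  sep : List ℕ → ℝ
  radius_pos : ∀ σ, 0 < radius σ
  closedBall_cons_subset : ∀ k σ,
    closedBall (center (k :: σ)) (radius (k :: σ)) ⊆ closedBall (center σ) (radius σ)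
  radius_cons_le : ∀ k σ, radius (k :: σ) ≤ radius σ / 2
  eight_mul_radius_cons_le : ∀ k σ, 8 * radius (k :: σ) ≤ sep σ
  sep_le_dist : ∀ σ, Pairwise fun k k' => sep σ ≤ dist (center (k :: σ)) (center (k' :: σ))

namespace SeparatedBallTree

variable {Q : Type*} [PseudoMetricSpace Q] (T : SeparatedBallTree Q)

def cell (σ : List ℕ) : Set Q := closedBall (T.center σ) (T.radius σ)

theorem isClosed_cell (σ : List ℕ) : IsClosed (T.cell σ) := isClosed_closedBall

theorem center_mem_cell (σ : List ℕ) : T.center σ ∈ T.cell σ :=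
  mem_closedBall_self (T.radius_pos σ).le

theorem dist_le_of_mem_cell {σ : List ℕ} {x y : Q} (hx : x ∈ T.cell σ) (hy : y ∈ T.cell σ) :
    dist x y ≤ 2 * T.radius σ := by
  have := dist_triangle_right x y (T.center σ)
  rw [cell, mem_closedBall] at hx hy
  linarith

theorem radius_le (σ : List ℕ) : T.radius σ ≤ T.radius [] * (1 / 2) ^ σ.length := by
  induction σ with
  | nil => simp
  | cons k σ ih =>
    rw [List.length_cons, pow_succ]
    linarith [T.radius_cons_le k σ]

theorem tendsto_radius_revPrefix (β : ℕ → ℕ) :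
    Tendsto (fun n => T.radius (revPrefix β n)) atTop (𝓝 0) := by
  have h := (tendsto_pow_atTop_nhds_zero_of_lt_one (by norm_num : (0 : ℝ) ≤ 1 / 2)
    (by norm_num)).const_mul (T.radius [])
  rw [mul_zero] at h
  exact squeeze_zero (fun n => (T.radius_pos _).le)
    (fun n => by simpa using T.radius_le (revPrefix β n)) h

theorem cell_revPrefix_antitone (β : ℕ → ℕ) : Antitone fun n => T.cell (revPrefix β n) :=
  antitone_nat_of_succ_le fun n => T.closedBall_cons_subset (β n) _

theorem sep_pos (σ : List ℕ) : 0 < T.sep σ := by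
  linarith [T.eight_mul_radius_cons_le 0 σ, T.radius_pos (0 :: σ)]

theorem eq_of_cell_cons_inter_ball {σ : List ℕ} {k k' : ℕ} {z : Q} {t : ℝ}
    (ht : t ≤ T.sep σ / 4) (h : (T.cell (k :: σ) ∩ ball z t).Nonempty)
    (h' : (T.cell (k' :: σ) ∩ ball z t).Nonempty) : k = k' := by
  obtain ⟨w, hw, hwz⟩ := h
  obtain ⟨w', hw', hw'z⟩ := h'
  by_contra hkk
  have := dist_triangle4 (T.center (k :: σ)) w w' (T.center (k' :: σ))
  have := dist_triangle w z w'
  rw [cell, mem_closedBall, dist_comm] at hw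
  rw [cell, mem_closedBall] at hw'
  rw [mem_ball] at hwz
  rw [mem_ball, dist_comm] at hw'z
  linarith [T.sep_le_dist σ hkk, T.eight_mul_radius_cons_le k σ,
    T.eight_mul_radius_cons_le k' σ, T.sep_pos σ]

/-- Induction on the level: only the children of the one candidate cell of the previous level
can meet a small ball, and they are `sep`-separated. -/
theorem exists_pos_subsingleton_cell_inter_ball (n : ℕ) (z : Q) :
    ∃ t > 0, {σ : List ℕ | σ.length = n ∧ (T.cell σ ∩ ball z t).Nonempty}.Subsingleton := by
  induction n with
  | zero => exact ⟨1, one_pos, fun σ hσ τ hτ => by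
      rw [List.length_eq_zero_iff.1 hσ.1, List.length_eq_zero_iff.1 hτ.1]⟩
  | succ n ih =>
    obtain ⟨t, ht, hsub⟩ := ih
    obtain ⟨σ₀, hσ₀⟩ : ∃ σ₀, ∀ σ : List ℕ, σ.length = n → (T.cell σ ∩ ball z t).Nonempty →
        σ = σ₀ := by
      rcases eq_empty_or_nonempty {σ : List ℕ | σ.length = n ∧ (T.cell σ ∩ ball z t).Nonempty}
        with h | ⟨σ₀, h₀⟩
      · exact ⟨[], fun σ hσ hne => (eq_empty_iff_forall_notMem.1 h σ ⟨hσ, hne⟩).elim⟩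
      · exact ⟨σ₀, fun σ hσ hne => hsub ⟨hσ, hne⟩ h₀⟩
    refine ⟨min t (T.sep σ₀ / 4), lt_min ht (by linarith [T.sep_pos σ₀]), ?_⟩
    have parent : ∀ {k σ}, (k :: σ).length = n + 1 →
        (T.cell (k :: σ) ∩ ball z (min t (T.sep σ₀ / 4))).Nonempty → σ = σ₀ :=
      fun hlen ⟨w, hw, hwz⟩ => hσ₀ _ (Nat.succ_injective hlen)
        ⟨w, T.closedBall_cons_subset _ _ hw, ball_subset_ball (min_le_left _ _) hwz⟩
    rintro σ ⟨hσ, hne⟩ σ' ⟨hσ', hne'⟩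
    obtain ⟨k, τ, rfl⟩ := List.exists_cons_of_length_eq_add_one hσ
    obtain ⟨k', τ', rfl⟩ := List.exists_cons_of_length_eq_add_one hσ'
    obtain rfl := parent hσ hne
    obtain rfl := parent hσ' hne'
    rw [T.eq_of_cell_cons_inter_ball (min_le_right _ _) hne hne']

theorem eq_of_mem_cell {σ σ' : List ℕ} (hlen : σ.length = σ'.length) {y : Q}
    (hy : y ∈ T.cell σ) (hy' : y ∈ T.cell σ') : σ = σ' := by
  obtain ⟨t, ht, hsub⟩ := T.exists_pos_subsingleton_cell_inter_ball σ'.length y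
  exact hsub ⟨hlen, y, hy, mem_ball_self ht⟩ ⟨rfl, y, hy', mem_ball_self ht⟩

def body : Set Q := ⋂ n, ⋃ σ : {σ : List ℕ // σ.length = n}, T.cell σ

theorem isClosed_body : IsClosed T.body := by
  refine isClosed_iInter fun n => LocallyFinite.isClosed_iUnion (fun z => ?_)
    fun σ => T.isClosed_cell σ
  obtain ⟨t, ht, hsub⟩ := T.exists_pos_subsingleton_cell_inter_ball n z
  refine ⟨ball z t, ball_mem_nhds z ht, Subsingleton.finite fun σ hσ τ hτ => ?_⟩
  exact Subtype.ext (hsub ⟨σ.2, hσ⟩ ⟨τ.2, hτ⟩)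

open Classical in
/-- Junk (`[]`) when `y` lies in no cell of level `n`. -/
noncomputable def addr (y : Q) (n : ℕ) : List ℕ :=
  if h : ∃ σ : List ℕ, σ.length = n ∧ y ∈ T.cell σ then h.choose else []

noncomputable def branch (y : Q) (n : ℕ) : ℕ := (T.addr y (n + 1)).headI

theorem addr_eq {y : Q} {σ : List ℕ} (hy : y ∈ T.cell σ) : T.addr y σ.length = σ := by
  have h : ∃ τ : List ℕ, τ.length = σ.length ∧ y ∈ T.cell τ := ⟨σ, rfl, hy⟩
  rw [addr, dif_pos h]
  exact T.eq_of_mem_cell h.choose_spec.1 h.choose_spec.2 hy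

theorem mem_cell_addr {y : Q} (hy : y ∈ T.body) (n : ℕ) :
    (T.addr y n).length = n ∧ y ∈ T.cell (T.addr y n) := by
  obtain ⟨⟨σ, hσ⟩, hyσ⟩ := mem_iUnion.1 (mem_iInter.1 hy n)
  subst hσ
  rw [T.addr_eq hyσ]
  exact ⟨rfl, hyσ⟩

theorem addr_eq_revPrefix {y : Q} (hy : y ∈ T.body) (n : ℕ) :
    T.addr y n = revPrefix (T.branch y) n := by
  refine eq_revPrefix_of_forall_exists_cons ?_ (fun n => ?_) n
  · exact List.length_eq_zero_iff.1 (T.mem_cell_addr hy 0).1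
  · obtain ⟨hlen, hmem⟩ := T.mem_cell_addr hy (n + 1)
    obtain ⟨k, τ, hkτ⟩ := List.exists_cons_of_length_eq_add_one hlen
    rw [hkτ] at hmem ⊢
    have hτ : τ.length = n := by simpa [hkτ] using hlen
    exact ⟨k, by rw [← hτ, T.addr_eq (T.closedBall_cons_subset k τ hmem)]⟩

theorem continuousOn_branch : ContinuousOn T.branch T.body := by
  refine continuousOn_pi.2 fun n y hy => continuousWithinAt_const.congr_of_eventuallyEq ?_ rfl
  obtain ⟨t, ht, hsub⟩ := T.exists_pos_subsingleton_cell_inter_ball (n + 1) y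
  have hmem : ∀ y' ∈ T.body, y' ∈ ball y t →
      T.addr y' (n + 1) ∈ {σ : List ℕ | σ.length = n + 1 ∧ (T.cell σ ∩ ball y t).Nonempty} :=
    fun y' hy' hy't => ⟨(T.mem_cell_addr hy' _).1, y', (T.mem_cell_addr hy' _).2, hy't⟩
  filter_upwards [inter_mem_nhdsWithin T.body (ball_mem_nhds y ht)] with y' ⟨hy', hy't⟩
  exact congrArg List.headI (hsub (hmem y' hy' hy't) (hmem y hy (mem_ball_self ht)))

theorem exists_mem_body_branch_eq [CompleteSpace Q] (β : ℕ → ℕ) :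
    ∃ y ∈ T.body, T.branch y = β := by
  have hanti := T.cell_revPrefix_antitone β
  obtain ⟨y, hy⟩ := nonempty_iInter_of_nonempty_biInter (fun n => T.isClosed_cell _)
    (fun n => isBounded_closedBall)
    (fun N => ⟨T.center (revPrefix β N), mem_iInter₂.2 fun n hn => hanti hn (T.center_mem_cell _)⟩)
    (squeeze_zero (fun n => diam_nonneg) (fun n => diam_closedBall (T.radius_pos _).le)
      (by simpa using (T.tendsto_radius_revPrefix β).const_mul 2))
  have hcell : ∀ n, y ∈ T.cell (revPrefix β n) := mem_iInter.1 hy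
  refine ⟨y, mem_iInter.2 fun n => mem_iUnion.2 ⟨⟨_, length_revPrefix β n⟩, hcell n⟩,
    funext fun n => ?_⟩
  have := T.addr_eq (hcell (n + 1))
  rw [length_revPrefix] at this
  rw [branch, this, revPrefix, List.headI_cons]

theorem not_mengerSpace_of_body_subset [CompleteSpace Q] {S : Set Q} (hS : T.body ⊆ S) :
    ¬ MengerSpace S := fun hM => by
  have hC : IsClosed ((↑) ⁻¹' T.body : Set S) := T.isClosed_body.preimage continuous_subtype_val
  refine not_mengerSpace_baire ((hM.of_isClosed hC).of_surjective (f := fun c => T.branch c.1.1)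
    (T.continuousOn_branch.comp_continuous (by fun_prop) fun c => c.2) fun β => ?_)
  obtain ⟨y, hy, rfl⟩ := T.exists_mem_body_branch_eq β
  exact ⟨⟨⟨y, hS hy⟩, hy⟩, rfl⟩

end SeparatedBallTree

structure SouslinScheme (Q : Type*) [TopologicalSpace Q] where
  cell : List ℕ → Set Q
  subset_iUnion_cons : ∀ s, cell s ⊆ ⋃ k, cell (k :: s)
  mem_of_tendsto : ∀ (α : ℕ → ℕ) (x : ℕ → Q) (y : Q),
    (∀ n, x n ∈ cell (revPrefix α n)) → Tendsto x atTop (𝓝 y) → y ∈ cell []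

namespace SouslinScheme

section Metric

variable {Q : Type*} [PseudoMetricSpace Q] (A : SouslinScheme Q)

theorem body_subset_cell_nil (T : SeparatedBallTree Q) {addr : List ℕ → List ℕ}
    (h₀ : addr [] = []) (hcons : ∀ k σ, ∃ a, addr (k :: σ) = a :: addr σ)
    (hne : ∀ σ, (A.cell (addr σ) ∩ T.cell σ).Nonempty) : T.body ⊆ A.cell [] := by
  intro y hy
  choose x hxA hxT using hne
  have hs := eq_revPrefix_of_forall_exists_cons (s := fun n => addr (T.addr y n))
    (by rw [T.addr_eq_revPrefix hy, revPrefix, h₀])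
    (fun n => by simp only [T.addr_eq_revPrefix hy, revPrefix]; exact hcons _ _)
  refine A.mem_of_tendsto _ (fun n => x (T.addr y n)) y (fun n => hs n ▸ hxA _) ?_
  rw [tendsto_iff_dist_tendsto_zero]
  refine squeeze_zero (fun n => dist_nonneg)
    (fun n => T.dist_le_of_mem_cell (hxT _) (T.mem_cell_addr hy n).2) ?_
  simpa [T.addr_eq_revPrefix hy] using (T.tendsto_radius_revPrefix (T.branch y)).const_mul 2

variable [CompleteSpace Q] [SecondCountableTopology Q]

theorem exists_children {s : List ℕ} {c : Q} {ρ : ℝ} (hρ : 0 < ρ)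
    (h : ¬ SigmaCompactCovered (A.cell s ∩ ball c (ρ / 2))) :
    ∃ (a : ℕ → ℕ) (c' : ℕ → Q) (r ε : ℝ), 0 < r ∧ r ≤ ρ / 2 ∧ 8 * r ≤ ε ∧
      (∀ k, closedBall (c' k) r ⊆ closedBall c ρ) ∧
      (∀ k, ¬ SigmaCompactCovered (A.cell (a k :: s) ∩ ball (c' k) (r / 2))) ∧
      Pairwise fun k k' => ε ≤ dist (c' k) (c' k') := by
  obtain ⟨ε, hε, y, hycl, hybig, hsep⟩ := exists_seq_separated_of_not_sigmaCompactCovered h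
  have hr : 0 < min (ρ / 2) (ε / 8) := lt_min (by positivity) (by positivity)
  have ha : ∀ k, ∃ a,
      ¬ SigmaCompactCovered (A.cell (a :: s) ∩ ball (y k) (min (ρ / 2) (ε / 8) / 2)) := by
    intro k
    by_contra! hall
    refine hybig k _ (half_pos hr) ((sigmaCompactCovered_iUnion hall).mono ?_)
    rintro z ⟨⟨hzs, -⟩, hzb⟩
    obtain ⟨a, ha⟩ := mem_iUnion.1 (A.subset_iUnion_cons s hzs)
    exact mem_iUnion.2 ⟨a, ha, hzb⟩
  choose a ha using ha
  refine ⟨a, y, _, ε, hr, min_le_left _ _, by linarith [min_le_right (ρ / 2) (ε / 8)],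
    fun k => closedBall_subset_closedBall' ?_, ha, hsep⟩
  have hyk : y k ∈ closedBall c (ρ / 2) :=
    closure_ball_subset_closedBall (closure_mono inter_subset_right (hycl k))
  linarith [min_le_left (ρ / 2) (ε / 8), mem_closedBall.1 hyk]

theorem exists_separatedBallTree_body_subset (hA : ¬ SigmaCompactCovered (A.cell [])) :
    ∃ T : SeparatedBallTree Q, T.body ⊆ A.cell [] := by
  obtain ⟨c₀, hc₀⟩ : (nonSigmaCompactLocus (A.cell [])).Nonempty :=
    nonempty_iff_ne_empty.2 fun h => not_isCompact_nonSigmaCompactLocus hA (h ▸ isCompact_empty)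
  obtain ⟨N, hN₀, hN⟩ := exists_tree_of_forall_exists_children
    (P := fun p : List ℕ × Q × ℝ =>
      0 < p.2.2 ∧ ¬ SigmaCompactCovered (A.cell p.1 ∩ ball p.2.1 (p.2.2 / 2)))
    (R := fun p ch => ∃ ε, ∀ k, (∃ a, (ch k).1 = a :: p.1) ∧
      closedBall (ch k).2.1 (ch k).2.2 ⊆ closedBall p.2.1 p.2.2 ∧ (ch k).2.2 ≤ p.2.2 / 2 ∧
      8 * (ch k).2.2 ≤ ε ∧ ∀ k', k ≠ k' → ε ≤ dist (ch k).2.1 (ch k').2.1)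
    (root := ([], c₀, 2)) ⟨two_pos, hc₀ _ (ball_mem_nhds c₀ (by norm_num))⟩
    fun p ⟨hρ, hp⟩ => by
      obtain ⟨a, c', r, ε, hr, hrρ, hrε, hsub, hbig, hsep⟩ := A.exists_children hρ hp
      exact ⟨fun k => (a k :: p.1, c' k, r), fun k => ⟨hr, hbig k⟩,
        ε, fun k => ⟨⟨a k, rfl⟩, hsub k, hrρ, hrε, fun k' hk => hsep hk⟩⟩
  choose ε hε using fun σ => (hN σ).2
  let T : SeparatedBallTree Q :=
    { center := fun σ => (N σ).2.1
      radius := fun σ => (N σ).2.2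
      sep := ε
      radius_pos := fun σ => (hN σ).1.1
      closedBall_cons_subset := fun k σ => (hε σ k).2.1
      radius_cons_le := fun k σ => (hε σ k).2.2.1
      eight_mul_radius_cons_le := fun k σ => (hε σ k).2.2.2.1
      sep_le_dist := fun σ k k' hk => (hε σ k).2.2.2.2 k' hk }
  refine ⟨T, A.body_subset_cell_nil T (addr := fun σ => (N σ).1) (by rw [hN₀])
    (fun k σ => (hε σ k).1) fun σ => ?_⟩
  obtain ⟨x, hxA, hxb⟩ := nonempty_of_not_sigmaCompactCovered (hN σ).1.2
  exact ⟨x, hxA, ball_subset_closedBall.trans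
    (closedBall_subset_closedBall (half_le_self (hN σ).1.1.le)) hxb⟩

end Metric

theorem sigmaCompactCovered_of_mengerSpace {Q : Type*} [TopologicalSpace Q] [PolishSpace Q]
    (A : SouslinScheme Q) (hM : MengerSpace (A.cell [])) : SigmaCompactCovered (A.cell []) := by
  let := upgradeIsCompletelyMetrizable Q
  by_contra hA
  obtain ⟨T, hT⟩ := A.exists_separatedBallTree_body_subset hA
  exact T.not_mengerSpace_of_body_subset hT hM

end SouslinScheme

section SouslinSchemeOfClosedCovers

/-- `schemeInter C (kₙ₋₁ :: … :: k₀ :: []) = C 0 k₀ ∩ … ∩ C (n-1) kₙ₋₁`. -/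
def schemeInter {K : Type*} (C : ℕ → ℕ → Set K) : List ℕ → Set K
  | [] => univ
  | k :: s => schemeInter C s ∩ C s.length k

theorem isClosed_schemeInter {K : Type*} [TopologicalSpace K] {C : ℕ → ℕ → Set K}
    (hC : ∀ n k, IsClosed (C n k)) : ∀ s, IsClosed (schemeInter C s)
  | [] => isClosed_univ
  | k :: s => (isClosed_schemeInter hC s).inter (hC _ k)

theorem schemeInter_revPrefix_antitone {K : Type*} (C : ℕ → ℕ → Set K) (α : ℕ → ℕ) :
    Antitone fun n => schemeInter C (revPrefix α n) :=
  antitone_nat_of_succ_le fun _ => inter_subset_left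

variable {Y K Q : Type*} [TopologicalSpace Y] [TopologicalSpace K] [TopologicalSpace Q]

/-- A limit along a branch is caught by a cluster point in the compact space `K`, which lies in
`⋂ₙ C n (α n) ⊆ range ι`. -/
theorem exists_souslinScheme_of_closed_covers [CompactSpace K] [T2Space Q] {ι : Y → K}
    (hι : IsInducing ι) {C : ℕ → ℕ → Set K} (hC : ∀ n k, IsClosed (C n k))
    (hcov : ∀ n, range ι ⊆ ⋃ k, C n k) (hbranch : ∀ α : ℕ → ℕ, ⋂ n, C n (α n) ⊆ range ι)
    {ρ : Y → Q} (hρ : Continuous ρ) : ∃ A : SouslinScheme Q, A.cell [] = range ρ := by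
  refine ⟨⟨fun s => ρ '' (ι ⁻¹' schemeInter C s), fun s => ?_, fun α x y hx hxy => ?_⟩, ?_⟩
  · rintro _ ⟨z, hz, rfl⟩
    obtain ⟨k, hk⟩ := mem_iUnion.1 (hcov s.length (mem_range_self z))
    exact mem_iUnion.2 ⟨k, z, ⟨hz, hk⟩, rfl⟩
  · choose z hz hzx using hx
    obtain ⟨w, -, hw⟩ := isCompact_univ.exists_mapClusterPt (f := atTop) (u := ι ∘ z)
      (by simp)
    have hwα : ∀ n, w ∈ schemeInter C (revPrefix α n) := fun n =>
      (isClosed_schemeInter hC _).mem_of_mapClusterPt hw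
        (eventually_atTop.2 ⟨n, fun m hm => schemeInter_revPrefix_antitone C α hm (hz m)⟩)
    obtain ⟨y₀, rfl⟩ := hbranch α (mem_iInter.2 fun n => length_revPrefix α n ▸ (hwα (n + 1)).2)
    have hy₀ : MapClusterPt (ρ y₀) atTop x := by
      have hz₀ : MapClusterPt y₀ atTop z := hι.mapClusterPt_iff.1 (mapClusterPt_comp.1 hw)
      have := hz₀.continuousAt_comp hρ.continuousAt
      rwa [show ρ ∘ z = x from funext hzx] at this
    rw [← eq_of_nhds_neBot (hy₀.clusterPt.mono hxy)]
    exact mem_image_of_mem ρ (mem_univ _)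
  · simp [schemeInter]

end SouslinSchemeOfClosedCovers

/-- Sum, with weights `2⁻ⁿ`, countably many Urysohn functions vanishing off `H` whose positivity
sets cover `S`. -/
theorem IsLindelof.exists_continuous_pos_between {K : Type*} [TopologicalSpace K]
    [CompletelyRegularSpace K] {S H : Set K} (hS : IsLindelof S) (hH : IsOpen H) (hSH : S ⊆ H) :
    ∃ f : K → ℝ, Continuous f ∧ (∀ w ∈ S, 0 < f w) ∧ ∀ w, 0 < f w → w ∈ H := by
  obtain ⟨g, hg⟩ : ∃ g : ℕ → {g : C(K, ℝ) // (∀ w, g w ∈ Icc 0 1) ∧ ∀ w ∉ H, g w = 0},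
      S ⊆ ⋃ n, {w | 0 < (g n).1 w} :=
    have : Nonempty {g : C(K, ℝ) // (∀ w, g w ∈ Icc 0 1) ∧ ∀ w ∉ H, g w = 0} :=
      ⟨⟨0, fun _ => ⟨le_rfl, zero_le_one⟩, fun _ _ => rfl⟩⟩
    hS.indexed_countable_subcover
      (fun g : {g : C(K, ℝ) // (∀ w, g w ∈ Icc 0 1) ∧ ∀ w ∉ H, g w = 0} => {w | 0 < g.1 w})
      (fun g => isOpen_lt continuous_const g.1.continuous) fun w hw => by
      obtain ⟨u, hu, hu0, hu1⟩ :=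
        CompletelyRegularSpace.completely_regular w Hᶜ hH.isClosed_compl (not_not.2 (hSH hw))
      refine mem_iUnion.2 ⟨⟨⟨fun w => 1 - u w, by fun_prop⟩,
        fun w => ⟨sub_nonneg.2 (u w).2.2, sub_le_self _ (u w).2.1⟩,
        fun w hw => by simp [hu1 hw]⟩, ?_⟩
      simp [hu0]
  have hle : ∀ n w, (1 / 2 : ℝ) ^ n * (g n).1 w ≤ (1 / 2) ^ n := fun n w =>
    mul_le_of_le_one_right (by positivity) ((g n).2.1 w).2
  have hnn : ∀ n w, 0 ≤ (1 / 2 : ℝ) ^ n * (g n).1 w := fun n w =>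
    mul_nonneg (by positivity) ((g n).2.1 w).1
  have hsum : ∀ w, Summable fun n => (1 / 2 : ℝ) ^ n * (g n).1 w := fun w =>
    summable_geometric_two.of_nonneg_of_le (hnn · w) (hle · w)
  refine ⟨fun w => ∑' n, (1 / 2 : ℝ) ^ n * (g n).1 w,
    continuous_tsum (fun n => by fun_prop) summable_geometric_two fun n w => by
      rw [Real.norm_of_nonneg (hnn n w)]; exact hle n w, fun w hw => ?_, fun w hw => ?_⟩
  · obtain ⟨n, hn⟩ := mem_iUnion.1 (hg hw)
    exact (hsum w).tsum_pos (hnn · w) n (mul_pos (by positivity) hn)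
  · by_contra hwH
    simp [(g _).2.2 w hwH] at hw

section CechComplete

variable {X Y Z Q : Type*} [TopologicalSpace X] [TopologicalSpace Y] [TopologicalSpace Z]
  [TopologicalSpace Q]

theorem CechComplete.exists_closed_covers [LindelofSpace Y] (hY : CechComplete Y) :
    ∃ C : ℕ → ℕ → Set (StoneCech Y), (∀ n k, IsClosed (C n k)) ∧
      (∀ n, range (stoneCechUnit : Y → StoneCech Y) ⊆ ⋃ k, C n k) ∧
      ∀ α : ℕ → ℕ, ⋂ n, C n (α n) ⊆ range (stoneCechUnit : Y → StoneCech Y) := by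
  obtain ⟨G, hGo, hG⟩ := isGδ_iff_eq_iInter_nat.1 hY
  have hcov : ∀ n, ∃ F : ℕ → {F : Set (StoneCech Y) // IsClosed F ∧ F ⊆ G n},
      range stoneCechUnit ⊆ ⋃ k, interior (F k).1 := fun n =>
    have : Nonempty {F : Set (StoneCech Y) // IsClosed F ∧ F ⊆ G n} :=
      ⟨⟨∅, isClosed_empty, empty_subset _⟩⟩
    (isLindelof_range continuous_stoneCechUnit).indexed_countable_subcover _
      (fun F => isOpen_interior) fun w hw => by
        obtain ⟨F, hF, hFc, hFG⟩ := exists_mem_nhds_isClosed_subset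
          ((hGo n).mem_nhds (mem_iInter.1 (hG ▸ hw) n))
        exact mem_iUnion.2 ⟨⟨F, hFc, hFG⟩, mem_interior_iff_mem_nhds.2 hF⟩
  choose F hF using hcov
  refine ⟨fun n k => (F n k).1, fun n k => (F n k).2.1,
    fun n => (hF n).trans (iUnion_mono fun k => interior_subset), fun α w hw => ?_⟩
  rw [hG]
  exact mem_iInter.2 fun n => (F n (α n)).2.2 (mem_iInter.1 hw n)

theorem CechComplete.exists_souslinScheme [T35Space Y] [LindelofSpace Y] (hY : CechComplete Y)
    [T2Space Q] {ρ : Y → Q} (hρ : Continuous ρ) : ∃ A : SouslinScheme Q, A.cell [] = range ρ :=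
  let ⟨_, hC, hcov, hbranch⟩ := hY.exists_closed_covers
  exists_souslinScheme_of_closed_covers isEmbedding_stoneCechUnit.isInducing hC hcov hbranch hρ

variable [T35Space Z]

/-- With `Z = ⋂ₙ Hₙ` in `βZ`, the `n`-th coordinate of `τ` is `1 / fₙ` for a function `fₙ` on `βZ`
positive on the image of `X` and vanishing off `Hₙ`; on a compact set of values of `τ` every
coordinate is bounded, which keeps `e x` in a closed, hence compact, subset of `⋂ₙ Hₙ`. -/
theorem CechComplete.exists_continuous_sigmaCompactCovered_range [LindelofSpace X]
    (hZ : CechComplete Z) {e : X → Z} (he : Continuous e) :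
    ∃ τ : X → ℕ → ℝ, Continuous τ ∧
      (SigmaCompactCovered (range τ) → SigmaCompactCovered (range e)) := by
  obtain ⟨H, hHo, hH⟩ := isGδ_iff_eq_iInter_nat.1 hZ
  have hφ : Continuous (stoneCechUnit ∘ e) := continuous_stoneCechUnit.comp he
  have hφH : ∀ n, range (stoneCechUnit ∘ e) ⊆ H n := fun n => by
    rw [range_comp]
    exact (image_subset_range _ _).trans (hH ▸ iInter_subset H n)
  choose f hf hfpos hfH using fun n =>
    (isLindelof_range hφ).exists_continuous_pos_between (hHo n) (hφH n)
  have hfφ : ∀ x n, 0 < f n (stoneCechUnit (e x)) := fun x n => hfpos n _ (mem_range_self x)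
  refine ⟨fun x n => (f n (stoneCechUnit (e x)))⁻¹,
    continuous_pi fun n => ((hf n).comp hφ).inv₀ fun x => (hfφ x n).ne', ?_⟩
  rintro ⟨_, ⟨C, hC, rfl⟩, hτC⟩
  choose M hM using fun i n => ((hC i).image (continuous_apply n)).bddAbove
  let F i := ⋂ n, {w | (max (M i n) 1)⁻¹ ≤ f n w}
  have hFZ : ∀ i, F i ⊆ range stoneCechUnit := fun i w hw => hH ▸ mem_iInter.2 fun n =>
    hfH n w ((inv_pos.2 (lt_max_of_lt_right one_pos)).trans_le (mem_iInter.1 hw n))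
  have hF : ∀ i, IsCompact (F i) := fun i =>
    (isClosed_iInter fun n => isClosed_le continuous_const (hf n)).isCompact
  refine ⟨⋃ i, stoneCechUnit ⁻¹' F i, isSigmaCompact_iUnion _ fun i =>
    (isEmbedding_stoneCechUnit.isInducing.isCompact_preimage' (hF i) (hFZ i)).isSigmaCompact, ?_⟩
  rintro _ ⟨x, rfl⟩
  obtain ⟨i, hi⟩ := mem_iUnion.1 (hτC (mem_range_self x))
  refine mem_iUnion.2 ⟨i, mem_iInter.2 fun n => ?_⟩
  have hxn := hM i n (mem_image_of_mem (fun v => v n) hi)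
  calc (max (M i n) 1)⁻¹ ≤ (f n (stoneCechUnit (e x)))⁻¹⁻¹ :=
        inv_anti₀ (inv_pos.2 (hfφ x n)) (le_max_of_le_left hxn)
    _ = f n (stoneCechUnit (e x)) := inv_inv _

end CechComplete

theorem menger_kAnalytic_hurewicz_general
    (X : Type u) [TopologicalSpace X]
    (hM : MengerSpace X) (hK : KAnalytic X) : HurewiczSpace X := by
  obtain ⟨Y, _, _, _, hY, g, hg, hgs⟩ := hK
  have := hM.lindelofSpace
  intro Z _ _ hZ e he
  obtain ⟨τ, hτ, hτe⟩ := hZ.exists_continuous_sigmaCompactCovered_range he.continuous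
  obtain ⟨A, hA⟩ := hY.exists_souslinScheme (hτ.comp hg)
  rw [range_comp, hgs.range_eq, image_univ] at hA
  exact hτe (hA ▸ A.sigmaCompactCovered_of_mengerSpace (hA ▸ mengerSpace_range hM hτ))

/-- Menger K-analytic spaces are Hurewicz. -/
theorem menger_kAnalytic_hurewicz
    (X : Type u) [TopologicalSpace X] [T35Space X]
    (hM : MengerSpace X) (hK : KAnalytic X) : HurewiczSpace X :=
  menger_kAnalytic_hurewicz_general X hM hK
end

section
/- There are no Michael spaces if and only if every K-Lusin space is productively Lindelöf. -/
open Set Function TopologicalSpace MeasureTheory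

universe u

/-!
A Lindelöf Čech-complete space `Y` is the image of the Baire space under a compact-valued upper
hemicontinuous map: write `Y = ⋂ₙ Gₙ` in `βY`, cover `Y` for each `n` by countably many open sets
`U n m` with `closure (U n m) ⊆ Gₙ`, and send `σ : ℕ → ℕ` to `⋂ₙ closure (U n (σ n))`. Such maps
carry Lindelöf sets to Lindelöf sets, and `(z, σ) ↦ {z} × Φ σ` is again one, so `Z × Y` is
Lindelöf whenever `Z × ℕ^ℕ` is; a K-Lusin space `X` is a continuous image of such a `Y`, hence so
is `X × Z`. Conversely the Baire space is completely metrizable, hence Čech-complete and K-Lusin,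
so productive Lindelöfness of K-Lusin spaces rules out Michael spaces.
-/

open Filter Topology

theorem IsDenseInducing.isGδ_range_of_completeSpace {X Y : Type*} [PseudoMetricSpace X]
    [CompleteSpace X] [TopologicalSpace Y] [T2Space Y] {e : X → Y} (he : IsDenseInducing e) :
    IsGδ (range e) := by
  set G : ℕ → Set Y := fun n ↦
    ⋃₀ {V | IsOpen V ∧ ∀ a ∈ e ⁻¹' V, ∀ b ∈ e ⁻¹' V, dist a b < 1 / (n + 1)}
  suffices range e = ⋂ n, G n from this ▸ .iInter_of_isOpen fun n ↦ isOpen_sUnion fun V hV ↦ hV.1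
  refine (subset_iInter fun n ↦ ?_).antisymm fun p hp ↦ ?_
  · rintro _ ⟨x, rfl⟩
    have hε : (0 : ℝ) < 1 / (n + 1) / 2 := by positivity
    obtain ⟨V', hV', hV'x⟩ := mem_comap.1 (he.nhds_eq_comap x ▸ Metric.ball_mem_nhds x hε)
    obtain ⟨V, hVV', hV, hxV⟩ := mem_nhds_iff.1 hV'
    refine ⟨V, ⟨hV, fun a ha b hb ↦ ?_⟩, hxV⟩
    have ha' := Metric.mem_ball.1 (hV'x (hVV' ha))
    have hb' := Metric.mem_ball.1 (hV'x (hVV' hb))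
    linarith [dist_triangle_right a b x]
  · have hF : Cauchy (comap e (𝓝 p)) := by
      refine Metric.cauchy_iff.2 ⟨he.comap_nhds_neBot p, fun ε hε ↦ ?_⟩
      obtain ⟨n, hn⟩ := exists_nat_one_div_lt hε
      obtain ⟨V, ⟨hV, hVdiam⟩, hpV⟩ := mem_iInter.1 hp n
      exact ⟨e ⁻¹' V, preimage_mem_comap (hV.mem_nhds hpV),
        fun a ha b hb ↦ (hVdiam a ha b hb).trans hn⟩
    obtain ⟨x, hx⟩ := CompleteSpace.complete hF
    have hlim : map e (comap e (𝓝 p)) ≤ 𝓝 (e x) ⊓ 𝓝 p :=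
      le_inf ((map_mono hx).trans (he.continuous.tendsto x)) map_comap_le
    exact ⟨x, eq_of_nhds_neBot (neBot_of_le (hf := hF.1.map e) hlim)⟩

theorem cechComplete_of_isCompletelyPseudoMetrizableSpace {X : Type u} [TopologicalSpace X]
    [IsCompletelyPseudoMetrizableSpace X] : CechComplete X :=
  letI := upgradeIsCompletelyPseudoMetrizable X
  isDenseInducing_stoneCechUnit.isGδ_range_of_completeSpace

section Hemicontinuity

variable {X Y : Type*} [TopologicalSpace X] [TopologicalSpace Y]

theorem upperHemicontinuous_iInter_apply_of_isClosed {ι α : Type*} [TopologicalSpace α]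
    [DiscreteTopology α] [CompactSpace Y] {C : ι → α → Set Y} (hC : ∀ i a, IsClosed (C i a)) :
    UpperHemicontinuous fun σ : ι → α ↦ ⋂ i, C i (σ i) := by
  refine .of_forall_isOpen fun σ W hW hσW ↦ ?_
  -- `Wᶜ` is compact, so finitely many coordinates of `σ` already force the intersection into `W`
  obtain ⟨u, hu⟩ := hW.isClosed_compl.isCompact.elim_finite_subfamily_closed
    (fun i ↦ C i (σ i)) (fun i ↦ hC i _) (by rwa [inter_comm, ← sdiff_eq, sdiff_eq_empty])
  have hagree : ∀ᶠ τ in 𝓝 σ, ∀ i ∈ u, τ i = σ i :=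
    (eventually_all_finset u).2 fun i _ ↦
      (continuous_apply i).continuousAt.eventually_mem (isOpen_discrete {σ i} |>.mem_nhds rfl)
  filter_upwards [hagree] with τ hτ y hy
  by_contra hyW
  refine hu.subset ⟨hyW, mem_iInter₂.2 fun i hi ↦ ?_⟩
  exact hτ i hi ▸ mem_iInter.1 hy i

theorem UpperHemicontinuous.isInducing_comp_of_subset_range {f : X → Set Y} {Z : Type*}
    [TopologicalSpace Z] {e : Z → Y} (hf : UpperHemicontinuous f) (he : IsInducing e)
    (hfe : ∀ x, f x ⊆ range e) : UpperHemicontinuous fun x ↦ e ⁻¹' f x := by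
  refine .of_forall_isOpen fun x u hu hxu ↦ ?_
  obtain ⟨v, hv, rfl⟩ := he.isOpen_iff.1 hu
  filter_upwards [hf.forall_isOpen x v hv ((preimage_subset_preimage_iff (hfe x)).1 hxu)]
    with x' hx' using preimage_mono hx'

theorem UpperHemicontinuous.singleton_prod {f : X → Set Y} (hf : UpperHemicontinuous f)
    (hfc : ∀ x, IsCompact (f x)) {Z : Type*} [TopologicalSpace Z] :
    UpperHemicontinuous fun q : Z × X ↦ {q.1} ×ˢ f q.2 := by
  refine .of_forall_isOpen fun q W hW hqW ↦ ?_
  obtain ⟨u, v, hu, hv, hzu, hxv, huvW⟩ :=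
    generalized_tube_lemma isCompact_singleton (hfc q.2) hW hqW
  filter_upwards [Eventually.prod_nhds (hu.mem_nhds (hzu rfl)) (hf.forall_isOpen q.2 v hv hxv)]
    with q' ⟨hz', hx'⟩
  exact (prod_mono (singleton_subset_iff.2 hz') hx').trans huvW

theorem IsLindelof.biUnion_of_upperHemicontinuous {s : Set X} (hs : IsLindelof s)
    {f : X → Set Y} (hf : UpperHemicontinuous f) (hfc : ∀ x, IsCompact (f x)) :
    IsLindelof (⋃ x ∈ s, f x) := by
  refine isLindelof_of_countable_subcover fun U hU hsU ↦ ?_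
  have hfin : ∀ x ∈ s, ∃ t : Finset _, f x ⊆ ⋃ i ∈ t, U i := fun x hx ↦
    (hfc x).elim_finite_subcover U hU ((subset_biUnion_of_mem hx).trans hsU)
  choose! t ht using hfin
  have hnhds : ∀ x ∈ s, {x' | f x' ⊆ ⋃ i ∈ t x, U i} ∈ 𝓝 x := fun x hx ↦
    hf.forall_isOpen x _ (isOpen_biUnion fun i _ ↦ hU i) (ht x hx)
  obtain ⟨c, hc, -, hsc⟩ := hs.elim_nhds_subcover _ hnhds
  refine ⟨⋃ x ∈ c, t x, hc.biUnion fun x _ ↦ (t x).countable_toSet, iUnion₂_subset fun x hx ↦ ?_⟩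
  obtain ⟨x', hx'c, hxx'⟩ := mem_iUnion₂.1 (hsc hx)
  intro y hy
  obtain ⟨i, hi, hyi⟩ := mem_iUnion₂.1 (hxx' hy)
  exact mem_iUnion₂.2 ⟨i, mem_iUnion₂.2 ⟨x', hx'c, hi⟩, hyi⟩

end Hemicontinuity

section BaireParametrization

variable {X : Type*} [TopologicalSpace X]

theorem IsLindelof.exists_nat_cover_closure_subset [RegularSpace X] {S G : Set X}
    (hS : IsLindelof S) (hG : IsOpen G) (hSG : S ⊆ G) :
    ∃ U : ℕ → Set X, (∀ m, IsOpen (U m)) ∧ (∀ m, closure (U m) ⊆ G) ∧ S ⊆ ⋃ m, U m := by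
  let ι := {V : Set X // IsOpen V ∧ closure V ⊆ G}
  have : Nonempty ι := ⟨⟨∅, isOpen_empty, by simp⟩⟩
  obtain ⟨g, hg⟩ := hS.indexed_countable_subcover (fun V : ι ↦ V.1) (fun V ↦ V.2.1) fun x hx ↦ by
    obtain ⟨t, htx, htc, htG⟩ := exists_mem_nhds_isClosed_subset (hG.mem_nhds (hSG hx))
    exact mem_iUnion.2 ⟨⟨interior t, isOpen_interior,
      (closure_minimal interior_subset htc).trans htG⟩, mem_interior_iff_mem_nhds.2 htx⟩
  exact ⟨fun m ↦ g m, fun m ↦ (g m).2.1, fun m ↦ (g m).2.2, hg⟩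

theorem IsGδ.exists_upperHemicontinuous_baire [CompactSpace X] [RegularSpace X] {S : Set X}
    (hS : IsGδ S) (hSL : IsLindelof S) :
    ∃ Φ : (ℕ → ℕ) → Set X, UpperHemicontinuous Φ ∧ (∀ σ, IsCompact (Φ σ)) ∧ ⋃ σ, Φ σ = S := by
  obtain ⟨G, hGo, rfl⟩ := isGδ_iff_eq_iInter_nat.1 hS
  have hcov (n : ℕ) := hSL.exists_nat_cover_closure_subset (hGo n) (iInter_subset G n)
  choose U hUo hUG hSU using hcov
  refine ⟨fun σ ↦ ⋂ n, closure (U n (σ n)),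
    upperHemicontinuous_iInter_apply_of_isClosed (C := fun n m ↦ closure (U n m))
      fun _ _ ↦ isClosed_closure,
    fun σ ↦ (isClosed_iInter fun _ ↦ isClosed_closure).isCompact, ?_⟩
  refine (iUnion_subset fun σ : ℕ → ℕ ↦ iInter_mono fun n ↦ hUG n (σ n)).antisymm fun x hx ↦ ?_
  choose σ hσ using fun n ↦ mem_iUnion.1 (hSU n hx)
  exact mem_iUnion.2 ⟨σ, mem_iInter.2 fun n ↦ subset_closure (hσ n)⟩

theorem CechComplete.exists_upperHemicontinuous_baire {Y : Type u} [TopologicalSpace Y]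
    [CompletelyRegularSpace Y] [LindelofSpace Y] (hY : CechComplete Y) :
    ∃ Φ : (ℕ → ℕ) → Set Y, UpperHemicontinuous Φ ∧ (∀ σ, IsCompact (Φ σ)) ∧ ⋃ σ, Φ σ = univ := by
  obtain ⟨Φ, hΦ, hΦc, hΦY⟩ :=
    IsGδ.exists_upperHemicontinuous_baire hY (isLindelof_range continuous_stoneCechUnit)
  have hΦe : ∀ σ, Φ σ ⊆ range stoneCechUnit := fun σ ↦ hΦY ▸ subset_iUnion Φ σ
  refine ⟨fun σ ↦ stoneCechUnit ⁻¹' Φ σ,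
    hΦ.isInducing_comp_of_subset_range isInducing_stoneCechUnit hΦe,
    fun σ ↦ isInducing_stoneCechUnit.isCompact_preimage' (hΦc σ) (hΦe σ), ?_⟩
  rw [← preimage_iUnion, hΦY, preimage_range]

theorem CechComplete.lindelofSpace_prod {Y : Type u} [TopologicalSpace Y]
    [CompletelyRegularSpace Y] [LindelofSpace Y] (hY : CechComplete Y) {Z : Type*}
    [TopologicalSpace Z] [LindelofSpace (Z × (ℕ → ℕ))] : LindelofSpace (Z × Y) := by
  obtain ⟨Φ, hΦ, hΦc, hΦY⟩ := hY.exists_upperHemicontinuous_baire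
  have hcover : ⋃ q ∈ (univ : Set (Z × (ℕ → ℕ))), {q.1} ×ˢ Φ q.2 = univ := by
    refine eq_univ_of_forall fun p ↦ ?_
    obtain ⟨σ, hσ⟩ := mem_iUnion.1 (hΦY ▸ mem_univ p.2)
    exact mem_biUnion (mem_univ (p.1, σ)) ⟨rfl, hσ⟩
  exact ⟨hcover ▸ isLindelof_univ.biUnion_of_upperHemicontinuous (hΦ.singleton_prod hΦc)
    fun q ↦ isCompact_singleton.prod (hΦc q.2)⟩

end BaireParametrization

/-- There are no Michael spaces iff every K-Lusin space is productively
Lindelöf. -/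
theorem no_michael_iff_kLusin_prodLindelof :
    (¬ ExistsMichaelSpace.{u}) ↔
      ∀ (X : Type u) (_ : TopologicalSpace X) (_ : T35Space X),
        KLusin X → ProductivelyLindelof X := by
  constructor
  · rintro hM X _ _ ⟨Y, _, _, hY, hYc, f, hf, -, hfs⟩ Z _ _ hZ
    have : LindelofSpace (Z × (ℕ → ℕ)) := not_not.1 fun hZB ↦ hM ⟨Z, _, inferInstance, hZ, hZB⟩
    have : LindelofSpace (Z × Y) := hYc.lindelofSpace_prod
    exact .of_continuous_surjective (f := Prod.map f id ∘ Prod.swap) (by fun_prop)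
      ((hfs.prodMap surjective_id).comp Prod.swap_surjective)
  · rintro h ⟨Y, _, _, hY, hYB⟩
    have hB : LindelofSpace (ULift.{u} (ℕ → ℕ)) :=
      .of_continuous_surjective continuous_uliftUp ULift.up_surjective
    have : IsCompletelyPseudoMetrizableSpace (ULift.{u} (ℕ → ℕ)) :=
      Homeomorph.ulift.isClosedEmbedding.IsCompletelyPseudoMetrizableSpace
    have hBK : KLusin (ULift.{u} (ℕ → ℕ)) := ⟨_, _, inferInstance, hB,
      cechComplete_of_isCompletelyPseudoMetrizableSpace, id, continuous_id, injective_id,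
      surjective_id⟩
    have : LindelofSpace (ULift.{u} (ℕ → ℕ) × Y) := h _ _ inferInstance hBK Y _ inferInstance hY
    exact hYB (.of_continuous_surjective (f := Prod.map id ULift.down ∘ Prod.swap) (by fun_prop)
      ((surjective_id.prodMap ULift.down_surjective).comp Prod.swap_surjective))
end
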